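/- arXiv:1210.2608 — 2 statements merged into one kernel-verified Lean document; each statement's English description precedes it below -/
import Mathlib

section
/- In the semisimplification of the Jacquet module of an irreducible unramified principal series χ₁ × χ₂ ⋊ σ of GSp₄(F) with respect to the Borel, the eight characters give rise to the eight pairs of eigenvalues of (t₁, t₂) = (diag(1,1,ϖ⁻¹,ϖ⁻¹), diag(1,ϖ⁻¹,ϖ⁻¹,ϖ⁻²)): namely S = {(δ,δγ),(δ,δβ),(α,αβ),(α,αγ),(γ,γδ),(γ,γα),(β,βδ),(β,βα)} where α = χ₁χ₂σ(ϖ⁻¹), β = χ₁σ(ϖ⁻¹), γ = χ₂σ(ϖ⁻¹), δ = σ(ϖ⁻¹); and these eight pairs are pairwise distinct if and only if χ₁(ϖ) ≠ 1, χ₂(ϖ) ≠ 1 and χ₁(ϖ) ≠ χ₂(ϖ)^{±1}. -/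
/-- The eight pairs of (t₁,t₂)-eigenvalues on the Borel Jacquet module of an
unramified principal series of GSp₄ are pairwise distinct iff
χ₁(ϖ) ≠ 1, χ₂(ϖ) ≠ 1 and χ₁(ϖ) ≠ χ₂(ϖ)^{±1}, expressed via the Satake
parameters α, β, γ, δ with αδ = βγ. -/
theorem stmt7 (α β γ δ : ℂ) (hα : α ≠ 0) (hβ : β ≠ 0) (hγ : γ ≠ 0) (hδ : δ ≠ 0)
    (h : α * δ = β * γ) :
    ([(δ, δ * γ), (δ, δ * β), (α, α * β), (α, α * γ),
      (γ, γ * δ), (γ, γ * α), (β, β * δ), (β, β * α)] : List (ℂ × ℂ)).Nodup ↔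
      (β ≠ δ ∧ γ ≠ δ ∧ β ≠ γ ∧ β * γ ≠ δ ^ 2) := by
  simp only [List.nodup_cons, List.mem_cons, List.not_mem_nil, or_false, not_or,
    Prod.mk.injEq, not_and, List.nodup_nil, and_true]
  constructor
  · rintro ⟨H1, H2, H3, H4, -, -, -⟩
    refine ⟨?_, ?_, ?_, ?_⟩
    · intro e
      have hag : α = γ := mul_right_cancel₀ hδ (by linear_combination h + γ * e)
      exact H4.2.1 hag (by ring)
    · intro e
      have hab : α = β := mul_right_cancel₀ hγ (by linear_combination h + α * e)
      exact H3.2.2.2.2 hab (by ring)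
    · exact fun e => H1.1 trivial (by rw [e])
    · intro e
      have had : δ = α := (mul_right_cancel₀ hδ (by linear_combination h + e)).symm
      exact H2.1 had (by rw [had])
  · rintro ⟨hbd, hgd, hbg, hbg2⟩
    have had : δ ≠ α := fun e => hbg2 (by linear_combination -h - δ * e)
    have hag : α ≠ γ := fun e => hbd (mul_left_cancel₀ hγ (by linear_combination h - δ * e)).symm
    have hab : α ≠ β := fun e => hgd (mul_left_cancel₀ hβ (by linear_combination h - δ * e)).symm
    have n1 : δ * γ ≠ δ * β := fun e => hbg (mul_left_cancel₀ hδ e).symm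
    have n2 : α * β ≠ α * γ := fun e => hbg (mul_left_cancel₀ hα e)
    have n3 : γ * δ ≠ γ * α := fun e => had (mul_left_cancel₀ hγ e)
    have n4 : β * δ ≠ β * α := fun e => had (mul_left_cancel₀ hβ e)
    simp [had, hbd.symm, hgd.symm, hag, hab, hbg.symm, n1, n2, n3, n4]
end

section
/- Let V be a module over a commutative monoid M acting by linear endomorphisms on a complex vector space, decomposed as V = ⊕_{χ∈S} V_χ into nonzero generalized eigenspace summands indexed by distinct characters χ of a central subgroup H acting on each V_χ with generalized character χ, each V_χ stable under M. If v ∈ V generates V as an M-module, then for every χ ∈ S the component of v in V_χ is nonzero. -/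
/-!
The sum `W` of the summands other than `V_χ` is `M`-stable, so if it contained `v` it would
contain the `M`-span of `v`, which is all of `V`. Independence of the summands makes `V_χ`
disjoint from `W`, which would force `V_χ = 0`.
-/

open Module.End

theorem Submodule.biSup_mem_invtSubmodule {R V ι : Type*} [Semiring R] [AddCommMonoid V]
    [Module R V] (f : Module.End R V) {s : Set ι} {N : ι → Submodule R V}
    (hN : ∀ i ∈ s, N i ∈ f.invtSubmodule) : (⨆ i ∈ s, N i) ∈ f.invtSubmodule := by
  rw [mem_invtSubmodule_iff_map_le]
  simp only [Submodule.map_iSup]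
  exact iSup₂_mono fun i hi => (mem_invtSubmodule_iff_map_le f).1 (hN i hi)

theorem Submodule.eq_top_of_mem_of_span_orbit_eq_top {R V M : Type*} [Semiring R]
    [AddCommMonoid V] [Module R V] (ρ : M → Module.End R V) {v : V}
    (hv : span R {w | ∃ m, w = ρ m v} = ⊤) {W : Submodule R V}
    (hW : ∀ m, W ∈ (ρ m).invtSubmodule) (hvW : v ∈ W) : W = ⊤ :=
  top_le_iff.1 <| hv ▸ span_le.2 fun _ ⟨m, hm⟩ => hm ▸ hW m hvW

theorem iSupIndep.disjoint_biSup_erase {α ι : Type*} [CompleteLattice α] [DecidableEq ι]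
    {f : ι → α} {s : Finset ι} (h : iSupIndep fun i : s => f i) {i : ι} (hi : i ∈ s) :
    Disjoint (f i) (⨆ j ∈ s.erase i, f j) := by
  have hsup : s.SupIndep f := by
    rw [← Finset.supIndep_attach, ← Finset.univ_eq_attach]
    exact iSupIndep_iff_supIndep_univ.1 h
  simpa only [Finset.sup_eq_iSup] using Finset.supIndep_iff_disjoint_erase.1 hsup i hi

theorem stmt15_general (V : Type*) [AddCommGroup V] [Module ℂ V]
    (M : Type*) [Monoid M] (ρ : M →* Module.End ℂ V)
    (H : Type*) [DecidableEq (H → ℂ)]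
    (S : Finset (H → ℂ)) (Vχ : (H → ℂ) → Submodule ℂ V)
    (hne : ∀ χ ∈ S, Vχ χ ≠ ⊥)
    (hstable : ∀ χ ∈ S, ∀ m : M, ∀ w ∈ Vχ χ, ρ m w ∈ Vχ χ)
    (hinternal : DirectSum.IsInternal (fun χ : {χ // χ ∈ S} => Vχ χ.1))
    (v : V)
    (hv : Submodule.span ℂ {w | ∃ m : M, w = ρ m v} = ⊤) :
    ∀ χ ∈ S, v ∉ ⨆ χ' ∈ S.erase χ, Vχ χ' := by
  intro χ hχ hvW
  have hW_invt : ∀ m, (⨆ χ' ∈ S.erase χ, Vχ χ') ∈ (ρ m).invtSubmodule := fun m =>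
    Submodule.biSup_mem_invtSubmodule _ fun χ' hχ' =>
      hstable χ' (Finset.mem_of_mem_erase hχ') m
  have hW_top := Submodule.eq_top_of_mem_of_span_orbit_eq_top ρ hv hW_invt hvW
  have hdisj := hinternal.submodule_iSupIndep.disjoint_biSup_erase hχ
  exact hne χ hχ (hdisj.eq_bot_of_le (hW_top ▸ le_top))

/-- If v generates V as an M-module and V decomposes as a direct sum of nonzero
M-stable generalized-eigenspace summands for a commuting family H, then the
component of v in each summand is nonzero. -/
theorem stmt15 (V : Type*) [AddCommGroup V] [Module ℂ V]
    (M : Type*) [Monoid M] (ρ : M →* Module.End ℂ V)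
    (H : Type*) [DecidableEq (H → ℂ)] (act : H → Module.End ℂ V)
    (hcomm : ∀ (h : H) (m : M), Commute (act h) (ρ m))
    (S : Finset (H → ℂ)) (Vχ : (H → ℂ) → Submodule ℂ V)
    (hne : ∀ χ ∈ S, Vχ χ ≠ ⊥)
    (hgen : ∀ χ ∈ S, ∀ w ∈ Vχ χ, ∀ h : H,
      ∃ n : ℕ, ((act h - algebraMap ℂ (Module.End ℂ V) (χ h)) ^ n) w = 0)
    (hstable : ∀ χ ∈ S, ∀ m : M, ∀ w ∈ Vχ χ, ρ m w ∈ Vχ χ)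
    (hinternal : DirectSum.IsInternal (fun χ : {χ // χ ∈ S} => Vχ χ.1))
    (v : V)
    (hv : Submodule.span ℂ {w | ∃ m : M, w = ρ m v} = ⊤) :
    ∀ χ ∈ S, v ∉ ⨆ χ' ∈ S.erase χ, Vχ χ' :=
  stmt15_general V M ρ H S Vχ hne hstable hinternal v hv
end
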